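/- Let (G,∼) be an acyclic turbulence chart and let V be a nonempty set of internal vertices of G. Then there exists a vertex v ∈ V and an equivalence class C of ∼_v such that every edge having a half-edge in C has its other half-edge incident to a vertex outside V (i.e., at a fringe vertex or at an internal vertex not in V). -/

import Mathlib

open Finset

/-- A turbulence chart: a finite undirected graph given by half-edges `H` with a
fixed-point-free involution `op` pairing half-edges into edges, a vertex map `vert`,
and at each internal vertex a partition of its half-edges into two nonempty classes,
encoded by `side : H → Bool`. -/
structure TurbChart where
  V : Type
  H : Type
  [fintV : Fintype V]
  [decV : DecidableEq V]
  [fintH : Fintype H]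
  [decH : DecidableEq H]
  vert : H → V
  op : H → H
  side : H → Bool
  op_op : ∀ h, op (op h) = h
  op_ne : ∀ h, op h ≠ h
  vert_cover : ∀ v, ∃ h, vert h = v
  sides_nonempty : ∀ v,
    2 ≤ (Finset.univ.filter fun h => vert h = v).card →
    ∀ b : Bool, ∃ h, vert h = v ∧ side h = b

attribute [instance] TurbChart.fintV TurbChart.decV TurbChart.fintH TurbChart.decH

namespace TurbChart

variable (T : TurbChart)

def degree (v : T.V) : ℕ := (Finset.univ.filter fun h => T.vert h = v).card

def Fringe (v : T.V) : Prop := T.degree v = 1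

def Internal (v : T.V) : Prop := 2 ≤ T.degree v

instance : DecidablePred T.Fringe := fun v =>
  decidable_of_iff (T.degree v = 1) Iff.rfl

instance : DecidablePred T.Internal := fun v =>
  decidable_of_iff (2 ≤ T.degree v) Iff.rfl

/-- A flow on a turbulence chart: a labelling of edges (encoded as an `op`-invariant
function on half-edges) conserving flow across the two classes at each internal vertex. -/
def IsFlow (F : T.H → ℝ) : Prop :=
  (∀ h, F (T.op h) = F h) ∧
  ∀ v, T.Internal v →
    ∑ h ∈ Finset.univ.filter (fun h => T.vert h = v ∧ T.side h = true), F h =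
    ∑ h ∈ Finset.univ.filter (fun h => T.vert h = v ∧ T.side h = false), F h

/-- The strength of a flow: half the sum of its values over fringe incidences. -/
noncomputable def strength (F : T.H → ℝ) : ℝ :=
  (1 / 2) * ∑ h ∈ Finset.univ.filter (fun h => T.Fringe (T.vert h)), F h

/-- The turbulence polyhedron `F₁(G,∼)`: nonnegative flows of strength 1. -/
def unitFlows : Set (T.H → ℝ) :=
  {F | T.IsFlow F ∧ (∀ h, 0 ≤ F h) ∧ T.strength F = 1}

/-- A string: a walk along oriented edges (an oriented edge is encoded by its tail
half-edge `a`, its head half-edge being `op a`) which crosses the class partition at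
each internal vertex it passes through. -/
def IsString (l : List T.H) : Prop :=
  List.Chain' (fun a b => T.vert (T.op a) = T.vert b ∧ T.side (T.op a) ≠ T.side b) l

/-- A route: a nonempty string starting and ending at fringe vertices. -/
def IsRoute (l : List T.H) : Prop :=
  T.IsString l ∧ l ≠ [] ∧
  (∀ h ∈ l.head?, T.Fringe (T.vert h)) ∧
  (∀ h ∈ l.getLast?, T.Fringe (T.vert (T.op h)))

/-- A band: a nonempty cyclically composable string which is not a proper power. -/
def IsBand (l : List T.H) : Prop :=
  l ≠ [] ∧ T.IsString (l ++ l) ∧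
  ¬ ∃ (c : List T.H) (k : ℕ), 2 ≤ k ∧ l = (List.replicate k c).flatten

def Acyclic : Prop := ¬ ∃ l, T.IsBand l

/-- The indicator vector of a walk: multiplicity of each edge (in either orientation). -/
noncomputable def indic (l : List T.H) : T.H → ℝ :=
  fun h => ((l.count h + l.count (T.op h) : ℕ) : ℝ)

/-- The inverse of a string. -/
def inv (l : List T.H) : List T.H := (l.map T.op).reverse

end TurbChart

/-- A framing on a turbulence chart: a linear order on each class of half-edges. -/
structure Framing (T : TurbChart) where
  lt : T.H → T.H → Prop
  lt_irrefl : ∀ h, ¬ lt h h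
  lt_trans : ∀ a b c, lt a b → lt b c → lt a c
  lt_compat : ∀ a b, lt a b → T.vert a = T.vert b ∧ T.side a = T.side b
  lt_total : ∀ a b, a ≠ b → T.vert a = T.vert b → T.side a = T.side b →
    lt a b ∨ lt b a

namespace TurbChart

variable (T : TurbChart)

/-- Substrings of a trail (a route, or a band where substrings of any power are allowed),
up to inverses. -/
def Substr (t : List T.H) (isBand : Bool) (s : List T.H) : Prop :=
  if isBand then
    ∃ k : ℕ, s <:+: (List.replicate k t).flatten ∨ s <:+: T.inv (List.replicate k t).flatten
  else s <:+: t ∨ s <:+: T.inv t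

/-- `p` contains the "low" member of an incompatibility whose "high" member lies in `q`. -/
def IsIncompatPair (R : Framing T) (p q : List T.H × Bool) : Prop :=
  ∃ (e₁ e₂ f₁ f₂ : T.H) (s : List T.H),
    R.lt (T.op e₁) (T.op e₂) ∧ R.lt f₁ f₂ ∧
    T.IsString (e₁ :: (s ++ [f₁])) ∧ T.IsString (e₂ :: (s ++ [f₂])) ∧
    T.Substr p.1 p.2 (e₁ :: (s ++ [f₁])) ∧ T.Substr q.1 q.2 (e₂ :: (s ++ [f₂]))

def Compatible (R : Framing T) (p q : List T.H × Bool) : Prop :=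
  ¬ (T.IsIncompatPair R p q ∨ T.IsIncompatPair R q p)

/-- A trail: a route (`Bool` component `false`) or a band (`true`). -/
def IsTrail (t : List T.H × Bool) : Prop :=
  if t.2 then T.IsBand t.1 else T.IsRoute t.1

noncomputable def indicT (t : List T.H × Bool) : T.H → ℝ := T.indic t.1

def RouteEquiv (l₁ l₂ : List T.H) : Prop := l₂ = l₁ ∨ l₂ = T.inv l₁

def BandEquiv (l₁ l₂ : List T.H) : Prop :=
  ∃ x y, l₁ = x ++ y ∧ (l₂ = y ++ x ∨ l₂ = T.inv (y ++ x))

def TrailEquiv (t₁ t₂ : List T.H × Bool) : Prop :=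
  t₁.2 = t₂.2 ∧ (if t₁.2 then T.BandEquiv t₁.1 t₂.1 else T.RouteEquiv t₁.1 t₂.1)

/-- A bundle: a set of pairwise compatible (hence self-compatible) trails, taken with
distinct representatives up to equivalence of trails. -/
def IsBundle (R : Framing T) (S : Finset (List T.H × Bool)) : Prop :=
  (∀ t ∈ S, T.IsTrail t) ∧
  (∀ t₁ ∈ S, ∀ t₂ ∈ S, T.Compatible R t₁ t₂) ∧
  (∀ t₁ ∈ S, ∀ t₂ ∈ S, T.TrailEquiv t₁ t₂ → t₁ = t₂)

/-- The bundle simplihedron `Δ₁(K̄)`: unit bundle combinations of the bundle. -/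
def unitBundleSimplihedron (S : Finset (List T.H × Bool)) : Set (T.H → ℝ) :=
  {F | ∃ a : List T.H × Bool → ℝ,
    (∀ t ∈ S, 0 ≤ a t) ∧
    F = ∑ t ∈ S, a t • T.indicT t ∧
    ∑ t ∈ S.filter (fun t => t.2 = false), a t = 1}

/-- Every nonnegative flow has at most one representation as a positive bundle
combination (up to equivalence of trails). -/
def UniquePositiveCombos (R : Framing T) : Prop :=
  ∀ (S₁ S₂ : Finset (List T.H × Bool)) (a₁ a₂ : List T.H × Bool → ℝ),
    T.IsBundle R S₁ → T.IsBundle R S₂ →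
    (∀ t ∈ S₁, 0 < a₁ t) → (∀ t ∈ S₂, 0 < a₂ t) →
    (∑ t ∈ S₁, a₁ t • T.indicT t) = (∑ t ∈ S₂, a₂ t • T.indicT t) →
    (∀ t₁ ∈ S₁, ∃ t₂ ∈ S₂, T.TrailEquiv t₁ t₂ ∧ a₁ t₁ = a₂ t₂) ∧
    (∀ t₂ ∈ S₂, ∃ t₁ ∈ S₁, T.TrailEquiv t₁ t₂ ∧ a₁ t₁ = a₂ t₂)

end TurbChart


/-!
If no class escapes, every oriented edge ending in `S` can be continued, across the class
partition at its head, by another edge ending in `S`. Iterating a choice of continuations on the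
finite set of such edges eventually cycles, and the cycle is a string `l` with `l ++ l` a string.
Its primitive root is a band.
-/

theorem Function.nonempty_periodicPts_of_finite {α : Type*} [Finite α] [Nonempty α]
    (f : α → α) : (Function.periodicPts f).Nonempty := by
  obtain ⟨a⟩ := ‹Nonempty α›
  obtain ⟨m, n, hmn, heq⟩ : ∃ m n, m < n ∧ f^[m] a = f^[n] a := by
    obtain ⟨m, n, hne, heq⟩ := Finite.exists_ne_map_eq_of_infinite (f^[·] a)
    rcases hne.lt_or_gt with h | h
    · exact ⟨m, n, h, heq⟩
    · exact ⟨n, m, h, heq.symm⟩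
  refine ⟨f^[m] a, Function.mk_mem_periodicPts (n := n - m) (by omega) ?_⟩
  rw [Function.IsPeriodicPt, Function.IsFixedPt, ← Function.iterate_add_apply,
    Nat.sub_add_cancel hmn.le, heq]

theorem List.isChain_iterate {α : Type*} {R : α → α → Prop} {f : α → α}
    (hf : ∀ a, R a (f a)) (a : α) (n : ℕ) : (List.iterate f a n).IsChain R := by
  induction n generalizing a with
  | zero => exact .nil
  | succ n ih =>
    cases n with
    | zero => exact .singleton a
    | succ n => exact .cons_cons (hf a) (ih (f a))

theorem List.exists_ne_nil_isChain_append_self {α : Type*} [Finite α] [Nonempty α]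
    {R : α → α → Prop} (hR : ∀ a, ∃ b, R a b) :
    ∃ l : List α, l ≠ [] ∧ (l ++ l).IsChain R := by
  choose f hf using hR
  obtain ⟨x, hx⟩ := Function.nonempty_periodicPts_of_finite f
  obtain ⟨d, hd, hper⟩ := Function.mem_periodicPts.mp hx
  refine ⟨List.iterate f x d, by simpa [List.iterate_eq_nil] using hd.ne', ?_⟩
  have hcycle : List.iterate f x (d + d) = List.iterate f x d ++ List.iterate f x d := by
    rw [List.iterate_add, hper.eq]
  rw [← hcycle]
  exact List.isChain_iterate hf x (d + d)

namespace TurbChart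

variable (T : TurbChart)

theorem exists_isBand_of_isString_append_self {l : List T.H} (hl : l ≠ [])
    (hs : T.IsString (l ++ l)) : ∃ b, T.IsBand b := by
  induction hn : l.length using Nat.strong_induction_on generalizing l with
  | _ n ih =>
    by_cases hpow : ∃ (c : List T.H) (k : ℕ), 2 ≤ k ∧ l = (List.replicate k c).flatten
    · obtain ⟨c, k, hk, rfl⟩ := hpow
      obtain ⟨k, rfl⟩ := Nat.exists_eq_add_of_le' hk
      have hc : c ≠ [] := by rintro rfl; simp at hl
      have hcc : c ++ c <+: (List.replicate (k + 2) c).flatten := by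
        simp [List.replicate_succ, ← List.append_assoc]
      have hlen : c.length < n := by
        have : 0 < c.length := List.length_pos_iff_ne_nil.mpr hc
        simp only [← hn, List.length_flatten, List.map_replicate, List.sum_replicate, smul_eq_mul]
        nlinarith
      exact ih _ hlen hc (hs.prefix (hcc.trans (List.prefix_append _ _))) rfl
    · exact ⟨l, hl, hs, hpow⟩

end TurbChart

theorem exists_escaping_class_general (T : TurbChart) (hacyc : T.Acyclic)
    (S : Finset T.V) (hne : S.Nonempty) :
    ∃ v ∈ S, ∃ b : Bool, ∀ h, T.vert h = v → T.side h = b →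
      T.vert (T.op h) ∉ S := by
  by_contra! hcon
  let A := {h : T.H // T.vert (T.op h) ∈ S}
  have : Nonempty A := by
    obtain ⟨v, hv⟩ := hne
    obtain ⟨h, -, -, hh⟩ := hcon v hv true
    exact ⟨⟨h, hh⟩⟩
  have hcont : ∀ a : A, ∃ b : A,
      T.vert (T.op a.1) = T.vert b.1 ∧ T.side (T.op a.1) ≠ T.side b.1 := by
    intro a
    obtain ⟨h, hv, hs, hh⟩ := hcon _ a.2 (!T.side (T.op a.1))
    exact ⟨⟨h, hh⟩, hv.symm, by simp [hs]⟩
  obtain ⟨l, hl, hchain⟩ := List.exists_ne_nil_isChain_append_self hcont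
  refine hacyc (T.exists_isBand_of_isString_append_self (l := l.map Subtype.val)
    (by rwa [Ne, List.map_eq_nil_iff]) ?_)
  rw [TurbChart.IsString, ← List.map_append]
  exact (List.isChain_map _).mpr hchain

/-- In an acyclic turbulence chart, for any nonempty set `S` of internal
vertices there is a vertex `v ∈ S` and a class of `∼_v` all of whose edges lead out
of `S`. -/
theorem exists_escaping_class (T : TurbChart) (hacyc : T.Acyclic)
    (S : Finset T.V) (hne : S.Nonempty) (hint : ∀ v ∈ S, T.Internal v) :
    ∃ v ∈ S, ∃ b : Bool, ∀ h, T.vert h = v → T.side h = b →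
      T.vert (T.op h) ∉ S :=
  exists_escaping_class_general T hacyc S hne
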